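/- Let m ≥ 2 be an integer and α > 0 a real number. Then p < 0 and p^2 − 4r > 0; in fact one has the identity 16(m+α)^4·(p^2 − 4r) = 3α^4 + 4(3m−5)·α^3 + (274m^2 − 316m + 50)·α^2 + 4(m−1)(3m^2 + 52m + 45)·α + (m−1)^2·(3m^2 − 14m + 19), and the right-hand side is positive. -/

import Mathlib

/-- The coefficient `p` of the depressed quartic. -/
noncomputable def pCoeff (m : ℕ) (α : ℝ) : ℝ :=
  -(1 / (8 * ((m : ℝ) + α) ^ 2)) *
    (3 * (m : ℝ) ^ 2 - 10 * (m : ℝ) + 11 + 3 * α ^ 2 + 2 * (19 * (m : ℝ) - 21) * α)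

/-- The coefficient `q` of the depressed quartic. -/
noncomputable def qCoeff (m : ℕ) (α : ℝ) : ℝ :=
  -(1 / (8 * ((m : ℝ) + α) ^ 3)) *
    (α ^ 3 + α ^ 2 * (11 - 13 * (m : ℝ)) - α * ((m : ℝ) - 1) * (13 * (m : ℝ) + 23)
      + ((m : ℝ) - 3) * ((m : ℝ) - 1) ^ 2)

/-- The coefficient `r` of the depressed quartic. -/
noncomputable def rCoeff (m : ℕ) (α : ℝ) : ℝ :=
  -(1 / (256 * ((m : ℝ) + α) ^ 4)) *
    (3 * α ^ 4 + 172 * α ^ 3 - 1630 * α ^ 2 + 204 * α + 3 * (m : ℝ) ^ 4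
      - 180 * α * (m : ℝ) ^ 3 - 20 * (m : ℝ) ^ 3 - 366 * α ^ 2 * (m : ℝ) ^ 2
      + 1796 * α * (m : ℝ) ^ 2 + 34 * (m : ℝ) ^ 2 - 180 * α ^ 3 * (m : ℝ)
      + 1988 * α ^ 2 * (m : ℝ) - 1788 * α * (m : ℝ) + 12 * (m : ℝ) - 45)

/-- `16(m+α)⁴(p² − 4r)`, cleared of denominators. -/
noncomputable def discriminantPoly (m α : ℝ) : ℝ :=
  3 * α ^ 4 + 4 * (3 * m - 5) * α ^ 3 + (274 * m ^ 2 - 316 * m + 50) * α ^ 2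
    + 4 * (m - 1) * (3 * m ^ 2 + 52 * m + 45) * α + (m - 1) ^ 2 * (3 * m ^ 2 - 14 * m + 19)

lemma pCoeff_neg (m : ℕ) {α : ℝ} (hm : 2 ≤ m) (hα : 0 ≤ α) : pCoeff m α < 0 := by
  have hM : (2 : ℝ) ≤ m := by exact_mod_cast hm
  -- `3m² − 10m + 11` has negative discriminant, and `19m − 21 > 0`.
  have hnum : 0 < 3 * (m : ℝ) ^ 2 - 10 * m + 11 + 3 * α ^ 2 + 2 * (19 * m - 21) * α := by
    nlinarith [sq_nonneg (3 * (m : ℝ) - 5), sq_nonneg α,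
      mul_nonneg hα (show (0 : ℝ) ≤ 19 * m - 21 by linarith)]
  have hden : 0 < 1 / (8 * ((m : ℝ) + α) ^ 2) := by
    have : 0 < (m : ℝ) + α := by linarith
    positivity
  unfold pCoeff
  nlinarith

lemma sixteen_mul_pow_four_mul_pCoeff_sq_sub_four_mul_rCoeff (m : ℕ) {α : ℝ}
    (h : (m : ℝ) + α ≠ 0) :
    16 * ((m : ℝ) + α) ^ 4 * (pCoeff m α ^ 2 - 4 * rCoeff m α) = discriminantPoly m α := by
  unfold pCoeff rCoeff discriminantPoly
  field_simp
  ring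

lemma discriminantPoly_pos {m α : ℝ} (hm : 2 ≤ m) (hα : 0 ≤ α) : 0 < discriminantPoly m α := by
  -- All coefficients are nonnegative for `m ≥ 2`, and the constant term is positive
  -- since `3m² − 14m + 19` has negative discriminant.
  have h3 : 0 ≤ 4 * (3 * m - 5) * α ^ 3 := by
    have : 0 ≤ 3 * m - 5 := by linarith
    positivity
  have h2 : 0 ≤ (274 * m ^ 2 - 316 * m + 50) * α ^ 2 := by
    have : 0 ≤ 274 * m ^ 2 - 316 * m + 50 := by nlinarith
    positivity
  have h1 : 0 ≤ 4 * (m - 1) * (3 * m ^ 2 + 52 * m + 45) * α := by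
    have : 0 ≤ m - 1 := by linarith
    positivity
  have h0 : 0 < (m - 1) ^ 2 * (3 * m ^ 2 - 14 * m + 19) := by
    have : 0 < m - 1 := by linarith
    have : 0 < 3 * m ^ 2 - 14 * m + 19 := by nlinarith [sq_nonneg (3 * m - 7)]
    positivity
  unfold discriminantPoly
  positivity

/-- For `m ≥ 2` and `α > 0` one has `p < 0` and `p² − 4r > 0`; in fact
`16(m+α)⁴(p² − 4r)` equals the displayed polynomial, which is positive. -/
theorem p_neg_and_psq_sub_four_r_pos (m : ℕ) (hm : 2 ≤ m) (α : ℝ) (hα : 0 < α) :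
    pCoeff m α < 0 ∧ pCoeff m α ^ 2 - 4 * rCoeff m α > 0 ∧
      16 * ((m : ℝ) + α) ^ 4 * (pCoeff m α ^ 2 - 4 * rCoeff m α) =
        3 * α ^ 4 + 4 * (3 * (m : ℝ) - 5) * α ^ 3
          + (274 * (m : ℝ) ^ 2 - 316 * (m : ℝ) + 50) * α ^ 2
          + 4 * ((m : ℝ) - 1) * (3 * (m : ℝ) ^ 2 + 52 * (m : ℝ) + 45) * α
          + ((m : ℝ) - 1) ^ 2 * (3 * (m : ℝ) ^ 2 - 14 * (m : ℝ) + 19) ∧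
      0 < 3 * α ^ 4 + 4 * (3 * (m : ℝ) - 5) * α ^ 3
          + (274 * (m : ℝ) ^ 2 - 316 * (m : ℝ) + 50) * α ^ 2
          + 4 * ((m : ℝ) - 1) * (3 * (m : ℝ) ^ 2 + 52 * (m : ℝ) + 45) * α
          + ((m : ℝ) - 1) ^ 2 * (3 * (m : ℝ) ^ 2 - 14 * (m : ℝ) + 19) := by
  have hM : (2 : ℝ) ≤ m := by exact_mod_cast hm
  have hsum : 0 < (m : ℝ) + α := by linarith
  have hidentity := sixteen_mul_pow_four_mul_pCoeff_sq_sub_four_mul_rCoeff m hsum.ne'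
  have hpos := discriminantPoly_pos hM hα.le
  refine ⟨pCoeff_neg m hm hα.le, ?_, hidentity, hpos⟩
  rw [← hidentity] at hpos
  exact pos_of_mul_pos_right hpos (by positivity)
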